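/- Let α < β ≤ γ < δ with β - α = δ - γ = r > 0. Let ξ^1_κ = α + κ(β-α)/(K+1) and ξ^2_κ = γ + κ(δ-γ)/(K+1) for κ = 1,…,K, and let μ > 0. Then for every x with ξ^1_k < x < ξ^1_{k+1} (1 ≤ k ≤ K-1), the weight W_{μ,2}(x) = (∏_κ|x-ξ^2_κ|^{-μ})/(∏_κ|x-ξ^1_κ|^{-μ} + ∏_κ|x-ξ^2_κ|^{-μ}) satisfies W_{μ,2}(x) ≤ ( k!(K-k)! / ( ∏_{κ=1}^K (K-k+κ) + (K+1)^K ((γ-β)/r)^K ) )^μ. -/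

import Mathlib

/-!
With node spacing `h = r / (K + 1)`, the point `x` lies in the `k`-th gap of the first node set,
so the `j`-th node on either side of `x` is at most `j * h` away from it and
`∏ |x - ξ¹_κ| ≤ h ^ K * k! * (K - k)!`. Every node `ξ²_κ` lies at distance at least
`(γ - β) + (K - k + κ) * h` from `x`; expanding the product of these lower bounds and keeping only
its two extreme terms gives `∏ |x - ξ²_κ| ≥ (γ - β) ^ K + h ^ K * ∏ (K - k + κ)`. Dropping the
first summand of the denominator bounds the weight by `(∏ |x - ξ¹_κ| / ∏ |x - ξ²_κ|) ^ μ`.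
-/

open Finset Nat

lemma prod_Icc_one_eq_prod_range {M : Type*} [CommMonoid M] (f : ℕ → M) (n : ℕ) :
    ∏ κ ∈ Icc 1 n, f κ = ∏ i ∈ range n, f (i + 1) := by
  rw [range_eq_Ico, prod_Ico_add' f 0 n 1, zero_add, Ico_add_one_right_eq_Icc]

lemma pow_card_add_prod_le_prod_add {ι R : Type*} [CommSemiring R] [PartialOrder R]
    [IsOrderedRing R] {s : Finset ι} {c : R} {d : ι → R} (hs : s.Nonempty) (hc : 0 ≤ c)
    (hd : ∀ i ∈ s, 0 ≤ d i) : c ^ #s + ∏ i ∈ s, d i ≤ ∏ i ∈ s, (c + d i) := by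
  obtain ⟨i, hi⟩ := hs
  rw [← prod_const]
  exact prod_add_prod_le hi le_rfl (fun j hj _ => le_add_of_nonneg_right (hd j hj))
    (fun _ _ _ => le_add_of_nonneg_left hc) (fun _ _ => hc) hd

lemma rpow_neg_div_rpow_neg_add_le {a b : ℝ} (ha : 0 < a) (hb : 0 < b) (μ : ℝ) :
    b ^ (-μ) / (a ^ (-μ) + b ^ (-μ)) ≤ (a / b) ^ μ :=
  calc b ^ (-μ) / (a ^ (-μ) + b ^ (-μ)) ≤ b ^ (-μ) / a ^ (-μ) := by
        gcongr
        exact le_add_of_nonneg_right (by positivity)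
    _ = (a / b) ^ μ := by
        rw [Real.rpow_neg ha.le, Real.rpow_neg hb.le, Real.div_rpow ha.le hb.le]
        field_simp

section EquispacedNodes

variable {a c h x : ℝ}

lemma abs_sub_add_mul_le (hcx : c ≤ x) (hxc : x ≤ c + h) {j : ℝ} (hj : 1 ≤ j) :
    |x - (c + j * h)| ≤ j * h := by
  rw [abs_le]
  constructor <;> nlinarith

lemma prod_range_abs_sub_le (hcx : c ≤ x) (hxc : x ≤ c + h) (n : ℕ) :
    ∏ j ∈ range n, |x - (c + (j + 1) * h)| ≤ h ^ n * n ! :=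
  calc ∏ j ∈ range n, |x - (c + (j + 1) * h)| ≤ ∏ j ∈ range n, ((j + 1 : ℝ) * h) :=
        prod_le_prod (fun _ _ => abs_nonneg _) fun j _ =>
          abs_sub_add_mul_le hcx hxc (le_add_of_nonneg_left j.cast_nonneg)
    _ = h ^ n * n ! := by
        rw [prod_mul_distrib, prod_const, card_range, mul_comm, ← prod_range_add_one_eq_factorial]
        push_cast
        rfl

/-- Reflecting the nodes left of `x` about `a + (k + 1) * h` brings both halves into the form
of `prod_range_abs_sub_le`. -/
lemma prod_Icc_abs_sub_le {k K : ℕ} (hkK : k ≤ K)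
    (hx : x ∈ Set.Icc (a + k * h) (a + (k + 1) * h)) :
    ∏ κ ∈ Icc 1 K, |x - (a + κ * h)| ≤ h ^ K * (k ! * (K - k)! : ℕ) := by
  have hh : 0 ≤ h := by linarith [hx.1, hx.2]
  obtain ⟨m, rfl⟩ := Nat.exists_eq_add_of_le hkK
  rw [prod_Icc_one_eq_prod_range, prod_range_add, Nat.add_sub_cancel_left,
    ← prod_range_reflect _ k]
  have hleft : ∏ j ∈ range k, |x - (a + ((k - 1 - j + 1 : ℕ) : ℝ) * h)| =
      ∏ j ∈ range k, |-x - (-(a + (k + 1) * h) + (j + 1) * h)| :=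
    prod_congr rfl fun j hj => by
      rw [mem_range] at hj
      rw [← abs_neg, Nat.cast_add_one, Nat.cast_sub (by omega), Nat.cast_sub (by omega)]
      ring_nf
  have hright : ∏ j ∈ range m, |x - (a + ((k + j + 1 : ℕ) : ℝ) * h)| =
      ∏ j ∈ range m, |x - ((a + k * h) + (j + 1) * h)| :=
    prod_congr rfl fun j _ => by push_cast; ring_nf
  rw [hleft, hright]
  calc _ ≤ (h ^ k * k !) * (h ^ m * m !) :=
        mul_le_mul (prod_range_abs_sub_le (by linarith [hx.2]) (by linarith [hx.1]) k)
          (prod_range_abs_sub_le hx.1 (by linarith [hx.2]) m)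
          (prod_nonneg fun _ _ => abs_nonneg _) (by positivity)
    _ = h ^ (k + m) * (k ! * m ! : ℕ) := by push_cast; ring

lemma prod_abs_sub_pos {k : ℕ} (s : Finset ℕ) (hh : 0 < h)
    (hx : x ∈ Set.Ioo (a + k * h) (a + (k + 1) * h)) :
    0 < ∏ κ ∈ s, |x - (a + κ * h)| := by
  refine prod_pos fun κ _ => abs_pos.mpr (sub_ne_zero.mpr fun hxκ => ?_)
  rw [hxκ] at hx
  have hlo : (k : ℝ) < κ := by nlinarith [hx.1]
  have hhi : (κ : ℝ) < k + 1 := by nlinarith [hx.2]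
  norm_cast at hlo hhi
  omega

lemma prod_Icc_sub_add_pos {k K : ℕ} (hkK : k ≤ K) : 0 < ∏ κ ∈ Icc 1 K, ((K : ℝ) - k + κ) := by
  have hkK' : (k : ℝ) ≤ K := by exact_mod_cast hkK
  refine prod_pos fun κ hκ => ?_
  have : (1 : ℝ) ≤ κ := by exact_mod_cast (mem_Icc.mp hκ).1
  linarith

lemma le_prod_Icc_abs_sub {k K : ℕ} (hh : 0 ≤ h) (hkK : k ≤ K) (hK : 1 ≤ K)
    (hc : a + (K + 1) * h ≤ c) (hx : x ≤ a + (k + 1) * h) :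
    (c - (a + (K + 1) * h)) ^ K + h ^ K * ∏ κ ∈ Icc 1 K, ((K : ℝ) - k + κ) ≤
      ∏ κ ∈ Icc 1 K, |x - (c + κ * h)| := by
  have hkK' : (k : ℝ) ≤ K := by exact_mod_cast hkK
  have hterm : ∀ κ ∈ Icc 1 K, 0 ≤ ((K : ℝ) - k + κ) * h := fun κ _ => by positivity
  calc (c - (a + (K + 1) * h)) ^ K + h ^ K * ∏ κ ∈ Icc 1 K, ((K : ℝ) - k + κ)
      = (c - (a + (K + 1) * h)) ^ #(Icc 1 K) + ∏ κ ∈ Icc 1 K, ((K : ℝ) - k + κ) * h := by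
        rw [prod_mul_distrib, prod_const, Nat.card_Icc, Nat.add_sub_cancel, mul_comm (h ^ K)]
    _ ≤ ∏ κ ∈ Icc 1 K, ((c - (a + (K + 1) * h)) + ((K : ℝ) - k + κ) * h) :=
        pow_card_add_prod_le_prod_add (nonempty_Icc.mpr hK) (by linarith) hterm
    _ ≤ ∏ κ ∈ Icc 1 K, |x - (c + κ * h)| :=
        prod_le_prod (fun κ hκ => by linarith [hterm κ hκ]) fun κ _ => by
          rw [abs_sub_comm]
          exact le_trans (by linarith) (le_abs_self _)

end EquispacedNodes

theorem stmt_6_general (K : ℕ) (hK : 2 ≤ K) (α β γ δ r μ : ℝ)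
    (hβγ : β ≤ γ) (hr : 0 < r)
    (hr1 : β - α = r) (hr2 : δ - γ = r) (hμ : 0 < μ)
    (ξ1 ξ2 : ℕ → ℝ)
    (hξ1 : ∀ κ, ξ1 κ = α + (κ : ℝ) * (β - α) / (K + 1))
    (hξ2 : ∀ κ, ξ2 κ = γ + (κ : ℝ) * (δ - γ) / (K + 1))
    (k : ℕ) (hk2 : k ≤ K - 1)
    (x : ℝ) (hx : x ∈ Set.Ioo (ξ1 k) (ξ1 (k + 1))) :
    (∏ κ ∈ Finset.Icc 1 K, |x - ξ2 κ| ^ (-μ)) /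
        ((∏ κ ∈ Finset.Icc 1 K, |x - ξ1 κ| ^ (-μ)) +
          ∏ κ ∈ Finset.Icc 1 K, |x - ξ2 κ| ^ (-μ)) ≤
      (((k ! * (K - k)! : ℕ) : ℝ) /
          ((∏ κ ∈ Finset.Icc 1 K, ((K : ℝ) - k + κ)) +
            ((K : ℝ) + 1) ^ K * ((γ - β) / r) ^ K)) ^ μ := by
  set h := r / (K + 1) with hh_def
  set P := ∏ κ ∈ Finset.Icc 1 K, ((K : ℝ) - k + κ)
  set Q := ((K : ℝ) + 1) ^ K * ((γ - β) / r) ^ K with hQ_def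
  have hh : 0 < h := by positivity
  have hkK : k ≤ K := by omega
  have hβ : α + (K + 1) * h = β := by
    rw [hh_def, mul_div_cancel₀ _ (by positivity)]
    linarith
  have hscale : h ^ K * Q = (γ - β) ^ K := by
    rw [hQ_def, ← mul_assoc, ← mul_pow, ← mul_pow, hh_def]
    field_simp
  obtain rfl : ξ1 = fun κ : ℕ => α + κ * h := funext fun κ => by rw [hξ1, hr1, mul_div_assoc]
  obtain rfl : ξ2 = fun κ : ℕ => γ + κ * h := funext fun κ => by rw [hξ2, hr2, mul_div_assoc]
  push_cast at hx
  rw [Real.finsetProd_rpow _ _ (fun _ _ => abs_nonneg _),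
    Real.finsetProd_rpow _ _ (fun _ _ => abs_nonneg _)]
  have hD : 0 < h ^ K * (P + Q) := by
    have := sub_nonneg.mpr hβγ
    have hQ : 0 ≤ Q := by positivity
    exact mul_pos (pow_pos hh K) (add_pos_of_pos_of_nonneg (prod_Icc_sub_add_pos hkK) hQ)
  have hA_pos := prod_abs_sub_pos (Icc 1 K) hh hx
  have hA := prod_Icc_abs_sub_le hkK (Set.Ioo_subset_Icc_self hx)
  have hB : h ^ K * (P + Q) ≤ ∏ κ ∈ Icc 1 K, |x - (γ + κ * h)| := by
    have := le_prod_Icc_abs_sub hh.le hkK (by omega) (hβ ▸ hβγ) hx.2.le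
    rwa [hβ, ← hscale, ← mul_add, add_comm Q] at this
  refine (rpow_neg_div_rpow_neg_add_le hA_pos (hD.trans_le hB) μ).trans
    (Real.rpow_le_rpow (div_nonneg hA_pos.le (hD.le.trans hB)) ?_ hμ.le)
  calc _ ≤ h ^ K * (k ! * (K - k)! : ℕ) / (h ^ K * (P + Q)) :=
        div_le_div₀ (by positivity) hA hD hB
    _ = _ := mul_div_mul_left _ _ (pow_ne_zero K hh.ne')

theorem stmt_6 (K : ℕ) (hK : 2 ≤ K) (α β γ δ r μ : ℝ)
    (hαβ : α < β) (hβγ : β ≤ γ) (hγδ : γ < δ) (hr : 0 < r)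
    (hr1 : β - α = r) (hr2 : δ - γ = r) (hμ : 0 < μ)
    (ξ1 ξ2 : ℕ → ℝ)
    (hξ1 : ∀ κ, ξ1 κ = α + (κ : ℝ) * (β - α) / (K + 1))
    (hξ2 : ∀ κ, ξ2 κ = γ + (κ : ℝ) * (δ - γ) / (K + 1))
    (k : ℕ) (hk1 : 1 ≤ k) (hk2 : k ≤ K - 1)
    (x : ℝ) (hx : x ∈ Set.Ioo (ξ1 k) (ξ1 (k + 1))) :
    (∏ κ ∈ Finset.Icc 1 K, |x - ξ2 κ| ^ (-μ)) /
        ((∏ κ ∈ Finset.Icc 1 K, |x - ξ1 κ| ^ (-μ)) +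
          ∏ κ ∈ Finset.Icc 1 K, |x - ξ2 κ| ^ (-μ)) ≤
      (((k ! * (K - k)! : ℕ) : ℝ) /
          ((∏ κ ∈ Finset.Icc 1 K, ((K : ℝ) - k + κ)) +
            ((K : ℝ) + 1) ^ K * ((γ - β) / r) ^ K)) ^ μ :=
  stmt_6_general K hK α β γ δ r μ hβγ hr hr1 hr2 hμ ξ1 ξ2 hξ1 hξ2 k hk2 x hx
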